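/- Exact recovery under 1-NSP (sufficiency direction): Let (Ā, B̄, D̄) satisfy x_{i+1} = Ā x_i + B̄ u_i + d̄_i for i = 0,…,T−1 with S = supp(D̄), and suppose [X; U] satisfies the 1-NSP on (S, 𝒟⊖𝒟): for all (A,B) ≠ 0 with −AX−BU ∈ 𝒟⊖𝒟, ‖[A,B][X_S;U_S]‖_{2,col} < ‖[A,B][X_{S^c};U_{S^c}]‖_{2,col}. Then any feasible (A, B, D) with D ∈ 𝒟 and x_{i+1} = A x_i + B u_i + d_i for all i, with (A,B,D) ≠ (Ā,B̄,D̄), satisfies ‖D‖_{2,col} > ‖D̄‖_{2,col}. -/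

import Mathlib

/-!
Two models that explain the same trajectory differ by a pair `(Ā - A, B̄ - B)` whose residual on
the data is `D - D̄ ∈ 𝒟 ⊖ 𝒟`, so the null space property applies to it. As `D̄` vanishes off `S`,
the triangle inequality on `S` and the NSP inequality give `‖D̄‖ ≤ ‖D_S‖ + ‖(D - D̄)_S‖ <
‖D_S‖ + ‖D_{Sᶜ}‖ = ‖D‖`.
-/

/-- Euclidean (`ℓ2`) norm of a finitely indexed real vector. -/
noncomputable def nrm2 {ι : Type*} [Fintype ι] (v : ι → ℝ) : ℝ :=
  Real.sqrt (∑ j, v j ^ 2)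

theorem nrm2_eq_norm {ι : Type*} [Fintype ι] (v : ι → ℝ) : nrm2 v = ‖WithLp.toLp 2 v‖ := by
  simp [nrm2, EuclideanSpace.norm_eq]

theorem Finset.sum_norm_lt_sum_norm_of_sum_norm_sub_lt {ι E : Type*} [Fintype ι] [DecidableEq ι]
    [SeminormedAddGroup E] (S : Finset ι) {f g : ι → E} (hg : ∀ i ∉ S, g i = 0)
    (h : ∑ i ∈ S, ‖f i - g i‖ < ∑ i ∈ Sᶜ, ‖f i - g i‖) :
    ∑ i, ‖g i‖ < ∑ i, ‖f i‖ := by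
  have hfg : ∀ i ∈ Sᶜ, ‖f i - g i‖ = ‖f i‖ := fun i hi => by
    rw [hg i (Finset.mem_compl.1 hi), sub_zero]
  calc ∑ i, ‖g i‖ = ∑ i ∈ S, ‖g i‖ :=
        (Finset.sum_subset S.subset_univ fun i _ hi => by rw [hg i hi, norm_zero]).symm
    _ ≤ ∑ i ∈ S, (‖f i‖ + ‖f i - g i‖) :=
        Finset.sum_le_sum fun i _ => norm_le_norm_add_norm_sub (f i) (g i)
    _ < ∑ i ∈ S, ‖f i‖ + ∑ i ∈ Sᶜ, ‖f i‖ := by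
        rw [Finset.sum_add_distrib, ← Finset.sum_congr rfl hfg]
        gcongr
    _ = ∑ i, ‖f i‖ := Finset.sum_add_sum_compl S _

open Matrix in
theorem Matrix.sub_mulVec_add_sub_mulVec_eq_sub {ι κ ν R : Type*} [Fintype κ] [Fintype ν]
    [CommRing R] {A A' : Matrix ι κ R} {B B' : Matrix ι ν R} {x : κ → R} {u : ν → R}
    {d d' : ι → R} (h : A *ᵥ x + B *ᵥ u + d = A' *ᵥ x + B' *ᵥ u + d') :
    (A - A') *ᵥ x + (B - B') *ᵥ u = d' - d := by
  rw [Matrix.sub_mulVec, Matrix.sub_mulVec]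
  linear_combination (norm := module) h

/-- Exact recovery under 1-NSP (sufficiency direction).  If the trajectory is
generated by `x_{i+1} = Ā x_i + B̄ u_i + d̄_i` with `S = supp D̄`, and `[X; U]` satisfies the
`(1, S, 𝒟 ⊖ 𝒟)`-NSP, then any feasible `(A, B, D)` (i.e. `D ∈ 𝒟` and
`x_{i+1} = A x_i + B u_i + d_i` for all `i`) different from `(Ā, B̄, D̄)` has strictly larger
objective: `‖D̄‖_{2,col} < ‖D‖_{2,col}`. -/
theorem stmt9 {n m T : ℕ}
    (x : Fin (T + 1) → Fin n → ℝ) (u : Fin T → Fin m → ℝ)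
    (Abar : Matrix (Fin n) (Fin n) ℝ) (Bbar : Matrix (Fin n) (Fin m) ℝ)
    (Dbar : Fin T → Fin n → ℝ) (𝒟 : Set (Fin T → Fin n → ℝ))
    (hDbar : Dbar ∈ 𝒟)
    (hdyn : ∀ i : Fin T,
      x i.succ = Abar.mulVec (x i.castSucc) + Bbar.mulVec (u i) + Dbar i)
    (S : Finset (Fin T)) (hS : ∀ i, i ∈ S ↔ Dbar i ≠ 0)
    (hNSP : ∀ (A : Matrix (Fin n) (Fin n) ℝ) (B : Matrix (Fin n) (Fin m) ℝ),
      ¬(A = 0 ∧ B = 0) →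
      (∃ E ∈ 𝒟, ∃ F ∈ 𝒟,
        (fun i : Fin T => -(A.mulVec (x i.castSucc) + B.mulVec (u i))) = E - F) →
      ∑ i ∈ S, nrm2 (A.mulVec (x i.castSucc) + B.mulVec (u i)) <
        ∑ i ∈ Sᶜ, nrm2 (A.mulVec (x i.castSucc) + B.mulVec (u i))) :
    ∀ (A : Matrix (Fin n) (Fin n) ℝ) (B : Matrix (Fin n) (Fin m) ℝ)
      (D : Fin T → Fin n → ℝ), D ∈ 𝒟 →
      (∀ i : Fin T, x i.succ = A.mulVec (x i.castSucc) + B.mulVec (u i) + D i) →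
      ¬(A = Abar ∧ B = Bbar ∧ D = Dbar) →
      ∑ i, nrm2 (Dbar i) < ∑ i, nrm2 (D i) := by
  intro A B D hD hdyn' hne
  have hres (i : Fin T) :
      (Abar - A).mulVec (x i.castSucc) + (Bbar - B).mulVec (u i) = D i - Dbar i :=
    Matrix.sub_mulVec_add_sub_mulVec_eq_sub ((hdyn i).symm.trans (hdyn' i))
  have hne_zero : ¬(Abar - A = 0 ∧ Bbar - B = 0) := by
    rintro ⟨hA, hB⟩
    refine hne ⟨(sub_eq_zero.1 hA).symm, (sub_eq_zero.1 hB).symm, funext fun i => ?_⟩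
    simpa [hA, hB, sub_eq_zero, eq_comm] using hres i
  have hnsp := hNSP _ _ hne_zero ⟨Dbar, hDbar, D, hD, funext fun i => by simp [hres i]⟩
  simp only [hres, nrm2_eq_norm, WithLp.toLp_sub] at hnsp ⊢
  exact S.sum_norm_lt_sum_norm_of_sum_norm_sub_lt
    (fun i hi => by rw [of_not_not (mt (hS i).2 hi), WithLp.toLp_zero]) hnsp
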